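/- For every real q ∈ [-1, 1] and every real x with |x| < 1/8, the series W(x) = Σ_{n=0}^{∞} w_n(q) x^n converges and equals 2 / ( 1 - q + (1 + q) · √(1 - 4x) ). Equivalently, W(x) = 1 / ( 1 - ((1+q)/2) · (1 - √(1 - 4x)) ). -/

import Mathlib

set_option maxHeartbeats 2000000


open Finset

/-- The `m`-fold Catalan convolution: the sum over all tuples `(i_1, …, i_m)` of
nonnegative integers with `i_1 + … + i_m = k` of `C_{i_1} ⋯ C_{i_m}`. -/
def catConv (m k : ℕ) : ℕ :=
  ∑ i ∈ Finset.Nat.antidiagonalTuple m k, ∏ j, catalan (i j)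

/-- The weighted Catalan convolution
`w_n(q) = ∑_{m=1}^{n} (1+q)^m ∑_{i_1,…,i_m ≥ 0, i_1+…+i_m = n-m} C_{i_1} ⋯ C_{i_m}`,
with `w_0(q) = 1`. -/
noncomputable def w (q : ℝ) (n : ℕ) : ℝ :=
  if n = 0 then 1 else ∑ m ∈ Finset.Icc 1 n, (1 + q) ^ m * (catConv m (n - m) : ℝ)

lemma catConv_zero_apply (k : ℕ) : catConv 0 k = if k = 0 then 1 else 0 := by
  cases k with
  | zero => simp [catConv, Finset.Nat.antidiagonalTuple_zero_zero]
  | succ k => simp [catConv, Finset.Nat.antidiagonalTuple_zero_succ]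


lemma catConv_succ (m k : ℕ) :
    catConv (m+1) k = ∑ p ∈ antidiagonal k, catalan p.1 * catConv m p.2 := by
  have h1 : ∑ p ∈ antidiagonal k, catalan p.1 * catConv m p.2
      = ∑ z ∈ (antidiagonal k).sigma (fun p => Finset.Nat.antidiagonalTuple m p.2),
          catalan z.1.1 * ∏ j, catalan (z.2 j) := by
    rw [Finset.sum_sigma]
    exact Finset.sum_congr rfl fun p _ => by rw [catConv, Finset.mul_sum]
  rw [h1, catConv]
  refine Finset.sum_nbij'
    (fun (v : Fin (m+1) → ℕ) =>
      (⟨(v 0, ∑ j : Fin m, v j.succ), Fin.tail v⟩ : Σ _p : ℕ × ℕ, Fin m → ℕ))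
    (fun x => Fin.cons x.1.1 x.2) ?_ ?_ ?_ ?_ ?_
  · rintro v hv
    rw [Finset.Nat.mem_antidiagonalTuple] at hv
    rw [Finset.mem_sigma, Finset.Nat.mem_antidiagonalTuple, Finset.HasAntidiagonal.mem_antidiagonal]
    constructor
    · rw [← hv, Fin.sum_univ_succ]
    · rfl
  · rintro ⟨⟨a, b⟩, t⟩ hx
    rw [Finset.mem_sigma, Finset.HasAntidiagonal.mem_antidiagonal, Finset.Nat.mem_antidiagonalTuple] at hx
    rw [Finset.Nat.mem_antidiagonalTuple, Fin.sum_cons, hx.2, hx.1]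
  · intro v hv
    simp [Fin.cons_self_tail]
  · rintro ⟨⟨a, b⟩, t⟩ hx
    rw [Finset.mem_sigma, Finset.HasAntidiagonal.mem_antidiagonal, Finset.Nat.mem_antidiagonalTuple] at hx
    simp only [Fin.cons_zero, Fin.cons_succ, Fin.tail_cons]
    congr 1
    rw [hx.2]
  · intro v hv
    rw [Fin.prod_univ_succ]
    rfl

noncomputable def catGF (x : ℝ) : ℝ := ∑' n, (catalan n : ℝ) * x ^ n

section
variable {x : ℝ}

lemma catalan_le_four_pow' (n : ℕ) : (catalan n : ℝ) ≤ 4 ^ n := by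
  have : (catalan n : ℝ) ≤ ((4^n : ℕ) : ℝ) := by exact_mod_cast Nat.cast_le.mpr (by
    calc catalan n ≤ (n+1) * catalan n := Nat.le_mul_of_pos_left _ (by omega)
      _ = n.centralBinom := succ_mul_catalan_eq_centralBinom n
      _ ≤ 4 ^ n := by
        have h := Nat.sum_range_choose (2 * n)
        have h2 : (2*n).choose n ≤ ∑ i ∈ range (2*n+1), (2*n).choose i :=
          Finset.single_le_sum (f := fun i => (2*n).choose i) (fun i _ => Nat.zero_le _)
            (by simp; omega)
        have h4 : (4:ℕ)^n = 2^(2*n) := by rw [pow_mul]; norm_num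
        rw [Nat.centralBinom, h4, ← h]; exact h2)
  simpa using this

lemma cat_norm_bound (hx : |x| < 1/8) (n : ℕ) :
    ‖(catalan n : ℝ) * x ^ n‖ ≤ (1/2 : ℝ) ^ n := by
  rw [norm_mul, norm_pow, Real.norm_natCast, Real.norm_eq_abs]
  calc (catalan n : ℝ) * |x| ^ n ≤ 4 ^ n * (1/8) ^ n := by
        apply mul_le_mul (catalan_le_four_pow' n)
          (pow_le_pow_left₀ (abs_nonneg x) hx.le n)
          (pow_nonneg (abs_nonneg x) n) (pow_nonneg (by norm_num) n)
    _ = (1/2 : ℝ) ^ n := by rw [← mul_pow]; norm_num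

lemma cat_norm_summable (hx : |x| < 1/8) :
    Summable fun n => ‖(catalan n : ℝ) * x ^ n‖ :=
  Summable.of_nonneg_of_le (fun n => norm_nonneg _) (cat_norm_bound hx)
    (summable_geometric_of_lt_one (by norm_num) (by norm_num))

lemma cat_summable (hx : |x| < 1/8) : Summable fun n => (catalan n : ℝ) * x ^ n :=
  (cat_norm_summable hx).of_norm

lemma catGF_abs_le (hx : |x| < 1/8) : |catGF x| ≤ 2 := by
  have h1 : |catGF x| ≤ ∑' n, ‖(catalan n : ℝ) * x ^ n‖ := norm_tsum_le_tsum_norm (cat_norm_summable hx)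
  have h2 : ∑' n, ‖(catalan n : ℝ) * x ^ n‖ ≤ ∑' n : ℕ, (1/2 : ℝ) ^ n :=
    Summable.tsum_le_tsum (cat_norm_bound hx) (cat_norm_summable hx)
      (summable_geometric_of_lt_one (by norm_num) (by norm_num))
  have h3 : ∑' n : ℕ, (1/2 : ℝ) ^ n = 2 := by
    rw [tsum_geometric_of_lt_one (by norm_num) (by norm_num)]; norm_num
  linarith

lemma catGF_nonneg_of_nonneg (hx0 : 0 ≤ x) : 0 ≤ catGF x :=
  tsum_nonneg fun n => mul_nonneg (Nat.cast_nonneg _) (pow_nonneg hx0 n)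

lemma catGF_quadratic (hx : |x| < 1/8) : catGF x = 1 + x * catGF x ^ 2 := by
  have hs := cat_norm_summable hx
  have h2 : catGF x * catGF x = ∑' n, ∑ kl ∈ antidiagonal n,
      ((catalan kl.1 : ℝ) * x ^ kl.1) * ((catalan kl.2 : ℝ) * x ^ kl.2) :=
    tsum_mul_tsum_eq_tsum_sum_antidiagonal_of_summable_norm hs hs
  have h3 : ∀ n : ℕ, ∑ kl ∈ antidiagonal n,
      ((catalan kl.1 : ℝ) * x ^ kl.1) * ((catalan kl.2 : ℝ) * x ^ kl.2)
      = (catalan (n+1) : ℝ) * x ^ n := by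
    intro n
    rw [catalan_succ']
    push_cast
    rw [Finset.sum_mul]
    refine Finset.sum_congr rfl fun kl hkl => ?_
    rw [Finset.HasAntidiagonal.mem_antidiagonal] at hkl
    rw [← hkl, pow_add]; ring
  rw [tsum_congr h3] at h2
  have h4 : catGF x = 1 + ∑' n, (catalan (n+1) : ℝ) * x ^ (n+1) := by
    rw [catGF, Summable.tsum_eq_zero_add (cat_summable hx)]
    norm_num
  have h5 : x * (catGF x * catGF x) = ∑' n, (catalan (n+1) : ℝ) * x ^ (n+1) := by
    rw [h2, ← tsum_mul_left]
    exact tsum_congr fun n => by rw [pow_succ]; ring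
  rw [sq]
  linarith [h4, h5]

lemma two_x_catGF (hx : |x| < 1/8) :
    2 * x * catGF x = 1 - Real.sqrt (1 - 4 * x) := by
  set f := catGF x with hf
  have hq := catGF_quadratic hx
  have hu : (2 * x * f - 1)^2 = 1 - 4 * x := by nlinarith [hq]
  have hb : |f| ≤ 2 := catGF_abs_le hx
  have hxb : |x| < 1/8 := hx
  have habs : |2 * x * f| ≤ 1/2 := by
    rw [abs_mul, abs_mul, abs_two]
    nlinarith [abs_nonneg x, abs_nonneg f, hb, hxb.le]
  have hle : 2 * x * f - 1 ≤ 0 := by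
    have h := (abs_le.mp habs).2
    linarith
  have : Real.sqrt (1 - 4 * x) = -(2 * x * f - 1) := by
    rw [← hu, Real.sqrt_sq_eq_abs, abs_of_nonpos hle]
  linarith [this]
end

lemma conv_key (x : ℝ) (m n : ℕ) :
    ∑ kl ∈ antidiagonal n, ((catalan kl.1 : ℝ) * x ^ kl.1) * ((catConv m kl.2 : ℝ) * x ^ kl.2)
      = (catConv (m+1) n : ℝ) * x ^ n := by
  rw [catConv_succ]
  push_cast
  rw [Finset.sum_mul]
  refine Finset.sum_congr rfl fun kl hkl => ?_
  rw [Finset.HasAntidiagonal.mem_antidiagonal] at hkl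
  rw [← hkl, pow_add]; ring


lemma conv_pow (m : ℕ) : ∀ x : ℝ, |x| < 1/8 →
    (Summable fun k => ‖(catConv m k : ℝ) * x ^ k‖) ∧
    ∑' k, (catConv m k : ℝ) * x ^ k = catGF x ^ m := by
  induction m with
  | zero =>
    intro x hx
    constructor
    · apply summable_of_ne_finset_zero (s := ({0} : Finset ℕ))
      intro k hk
      rw [Finset.mem_singleton] at hk
      simp [catConv_zero_apply, hk]
    · rw [pow_zero, tsum_eq_single 0 (fun b hb => by simp [catConv_zero_apply, hb])]
      simp [catConv_zero_apply]
  | succ m ih =>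
    intro x hx
    have hs1 := cat_norm_summable hx
    have hs2 := (ih x hx).1
    constructor
    · have hax : |(|x|)| < 1/8 := by rwa [abs_abs]
      have hsum' : Summable fun n => ∑ kl ∈ antidiagonal n,
          ((catalan kl.1 : ℝ) * |x| ^ kl.1) * ((catConv m kl.2 : ℝ) * |x| ^ kl.2) :=
        summable_sum_mul_antidiagonal_of_summable_mul
          (f := fun k => (catalan k : ℝ) * |x| ^ k) (g := fun k => (catConv m k : ℝ) * |x| ^ k)
          (summable_mul_of_summable_norm (cat_norm_summable hax) (ih |x| hax).1)
      have h2 : Summable fun n => (catConv (m+1) n : ℝ) * |x| ^ n :=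
        hsum'.congr (conv_key |x| m)
      exact h2.congr fun k => by
        rw [Real.norm_eq_abs, abs_mul, abs_pow, Nat.abs_cast]
    · have h := tsum_mul_tsum_eq_tsum_sum_antidiagonal_of_summable_norm
        (f := fun k => (catalan k : ℝ) * x ^ k) (g := fun k => (catConv m k : ℝ) * x ^ k) hs1 hs2
      rw [(ih x hx).2, tsum_congr (conv_key x m)] at h
      rw [← h, pow_succ, ← catGF, mul_comm]

/-- For `q ∈ [-1,1]` and `|x| < 1/8`, the series `W(x) = ∑_{n=0}^{∞} w_n(q) x^n`
converges and equals `2 / (1 - q + (1+q) √(1-4x))`, equivalently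
`1 / (1 - ((1+q)/2)(1 - √(1-4x)))`. -/
theorem weighted_catalan_convolution_generating_function
    (q : ℝ) (hq : q ∈ Set.Icc (-1 : ℝ) 1) (x : ℝ) (hx : |x| < 1 / 8) :
    Summable (fun n : ℕ => w q n * x ^ n) ∧
    ∑' n : ℕ, w q n * x ^ n = 2 / (1 - q + (1 + q) * Real.sqrt (1 - 4 * x)) ∧
    ∑' n : ℕ, w q n * x ^ n = 1 / (1 - (1 + q) / 2 * (1 - Real.sqrt (1 - 4 * x))) := by
  obtain ⟨hq1, hq2⟩ := hq
  have hax : |(|x|)| < 1/8 := by rwa [abs_abs]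
  -- the summable family on ℕ × ℕ
  set T : ℕ × ℕ → ℝ := fun p => (1+q)^p.1 * (catConv p.1 p.2 : ℝ) * x^(p.1+p.2) with hT_def
  set fy : ℝ := catGF |x| with hfy_def
  have hfy0 : 0 ≤ fy := catGF_nonneg_of_nonneg (abs_nonneg x)
  have hfy2 : fy ≤ 2 := le_trans (le_abs_self _) (catGF_abs_le hax)
  -- summability at |x| of the catConv series
  have hconvy : ∀ m : ℕ, Summable fun k => (catConv m k : ℝ) * |x|^k := by
    intro m
    exact ((conv_pow m |x| hax).1).congr fun k => by
      rw [Real.norm_eq_abs, abs_mul, abs_pow, Nat.abs_cast, abs_abs]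
  have hconvy_sum : ∀ m : ℕ, ∑' k, (catConv m k : ℝ) * |x|^k = fy^m := fun m => (conv_pow m |x| hax).2
  -- the dominating family
  have hT'sum : Summable fun p : ℕ × ℕ => 2^p.1 * (catConv p.1 p.2 : ℝ) * |x|^(p.1+p.2) := by
    rw [summable_prod_of_nonneg (by
      intro p
      positivity)]
    constructor
    · intro m
      have := (hconvy m).mul_left (2^m * |x|^m)
      exact this.congr fun k => by rw [pow_add]; ring
    · have hrowval : ∀ m : ℕ, (∑' k, 2^m * (catConv m k : ℝ) * |x|^(m+k)) = (2 * |x| * fy)^m := by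
        intro m
        have h1 : (fun k => 2^m * (catConv m k : ℝ) * |x|^(m+k))
            = fun k => (2^m * |x|^m) * ((catConv m k : ℝ) * |x|^k) := by
          funext k; rw [pow_add]; ring
        rw [h1, tsum_mul_left, hconvy_sum m, mul_pow, mul_pow]
      apply Summable.congr _ (fun m => (hrowval m).symm)
      apply summable_geometric_of_lt_one (by positivity)
      nlinarith [abs_nonneg x]
  have hT : Summable T := by
    apply Summable.of_norm_bounded hT'sum
    rintro ⟨m, k⟩
    simp only [hT_def, norm_mul, norm_pow, Real.norm_eq_abs, Nat.abs_cast]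
    have h2 : |1+q| ≤ 2 := by rw [abs_le]; constructor <;> linarith
    gcongr <;> first | exact h2 | positivity
  -- row sums over antidiagonals give w
  have hrow : ∀ n : ℕ, ∑ p ∈ antidiagonal n, T p = w q n * x^n := by
    intro n
    have h1 : ∑ p ∈ antidiagonal n, T p
        = ∑ p ∈ antidiagonal n, (1+q)^p.1 * (catConv p.1 p.2 : ℝ) * x^n := by
      refine Finset.sum_congr rfl fun p hp => ?_
      rw [Finset.HasAntidiagonal.mem_antidiagonal] at hp
      simp only [hT_def, hp]
    rw [h1, Finset.Nat.sum_antidiagonal_eq_sum_range_succ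
      (fun a b => (1+q)^a * (catConv a b : ℝ) * x^n) n]
    rcases Nat.eq_zero_or_pos n with rfl | hn
    · simp [w, catConv_zero_apply]
    · have hins : range (n+1) = insert 0 (Finset.Icc 1 n) := by
        ext a; simp [Finset.mem_range, Finset.mem_Icc]; omega
      rw [hins, Finset.sum_insert (by simp)]
      have h0 : (1+q)^0 * (catConv 0 (n-0) : ℝ) * x^n = 0 := by
        rw [catConv_zero_apply, if_neg (by omega)]
        simp
      rw [h0, zero_add, w, if_neg (by omega), Finset.sum_mul]
  -- sigma summability
  have hS : Summable fun s : (Σ n : ℕ, antidiagonal n) => T s.2 :=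
    (Finset.HasAntidiagonal.sigmaAntidiagonalEquivProd.summable_iff (f := T)).2 hT
  have hfin : ∀ n : ℕ, (∑' c : (antidiagonal n : Finset (ℕ × ℕ)), T c) = w q n * x^n := by
    intro n
    rw [tsum_fintype, Finset.sum_coe_sort, hrow n]
  have hsumW : Summable (fun n : ℕ => w q n * x ^ n) := by
    have := hS.sigma
    exact this.congr fun n => hfin n
  refine ⟨hsumW, ?_⟩
  -- the value
  have hval1 : ∑' n : ℕ, w q n * x ^ n = ∑' p : ℕ × ℕ, T p := by
    rw [← Finset.HasAntidiagonal.sigmaAntidiagonalEquivProd.tsum_eq (f := T)]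
    simp only [Finset.HasAntidiagonal.sigmaAntidiagonalEquivProd_apply]
    rw [Summable.tsum_sigma' (fun n => (hasSum_fintype _).summable) hS]
    exact (tsum_congr hfin).symm
  set r : ℝ := (1+q) * (x * catGF x) with hr_def
  have hxfb : |x * catGF x| ≤ 1/4 := by
    rw [abs_mul]
    nlinarith [catGF_abs_le hx, abs_nonneg x, abs_nonneg (catGF x)]
  have hrb : |r| ≤ 1/2 := by
    rw [hr_def, abs_mul]
    have h1q : |1+q| ≤ 2 := by rw [abs_le]; constructor <;> linarith
    nlinarith [abs_nonneg (x * catGF x), abs_nonneg (1+q)]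
  have hval2 : ∑' p : ℕ × ℕ, T p = (1 - r)⁻¹ := by
    rw [Summable.tsum_prod' hT (fun m => by
      have := ((conv_pow m x hx).1.of_norm).mul_left ((1+q)^m * x^m)
      exact this.congr fun k => by simp only [hT_def]; rw [pow_add]; ring)]
    have hinner : ∀ m : ℕ, (∑' k, T (m, k)) = r^m := by
      intro m
      have h1 : (fun k => T (m, k)) = fun k => ((1+q)^m * x^m) * ((catConv m k : ℝ) * x^k) := by
        funext k; simp only [hT_def]; rw [pow_add]; ring
      rw [h1, tsum_mul_left, (conv_pow m x hx).2, hr_def, mul_pow, mul_pow]; ring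
    rw [tsum_congr hinner, tsum_geometric_of_norm_lt_one (by rw [Real.norm_eq_abs]; linarith)]
  rw [hval1, hval2]
  -- algebra
  have hsq := two_x_catGF hx
  have hrlt : 1 - r > 0 := by cases abs_le.mp hrb; linarith
  constructor
  · have hden : 1 - q + (1+q) * Real.sqrt (1 - 4*x) = 2 * (1 - r) := by
      rw [hr_def]; nlinarith [hsq]
    rw [hden]
    field_simp
  · have hden : 1 - (1+q)/2 * (1 - Real.sqrt (1 - 4*x)) = 1 - r := by
      rw [hr_def]; nlinarith [hsq]
    rw [hden, one_div]
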